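/- If N is a tree-child network on X ⊆ [n], j ∈ X, i ∈ X with σ_N(i) = T, then in N' = ^{(i,j)}N: σ_{N'}(i) = P, σ_{N'}(j) = S, and for l ∈ [n] \ {i,j}, σ_{N'}(l) = S if (i,l) is a cherry of N, and σ_{N'}(l) = σ_N(l) otherwise. -/
import Mathlib


/-- A directed graph with node set `V ⊆ ℕ` and arc set `A`.  Leaves are
identified with their taxon labels (natural numbers). -/
structure Net where
  V : Finset ℕ
  A : Finset (ℕ × ℕ)

namespace Net

def indeg (N : Net) (v : ℕ) : ℕ := (N.A.filter (fun a => a.2 = v)).card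
def outdeg (N : Net) (v : ℕ) : ℕ := (N.A.filter (fun a => a.1 = v)).card

def isLeaf (N : Net) (v : ℕ) : Prop := v ∈ N.V ∧ N.indeg v = 1 ∧ N.outdeg v = 0
def isRoot (N : Net) (v : ℕ) : Prop := v ∈ N.V ∧ N.indeg v = 0 ∧ N.outdeg v = 1
def isTreeNode (N : Net) (v : ℕ) : Prop := v ∈ N.V ∧ N.indeg v = 1 ∧ N.outdeg v = 2
def isRetic (N : Net) (v : ℕ) : Prop := v ∈ N.V ∧ N.indeg v = 2 ∧ N.outdeg v = 1

/-- The set of leaves (= taxa) of a network. -/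
def leaves (N : Net) : Finset ℕ := N.V.filter (fun v => N.indeg v = 1 ∧ N.outdeg v = 0)

/-- Number of reticulation nodes. -/
def numRetic (N : Net) : ℕ := (N.V.filter (fun v => N.indeg v = 2 ∧ N.outdeg v = 1)).card

/-- `N` is a rooted binary phylogenetic network: arcs join nodes, it is acyclic,
has a unique root, and every node is a root, leaf, tree node or reticulation. -/
def isPhylo (N : Net) : Prop :=
  (∀ a ∈ N.A, a.1 ∈ N.V ∧ a.2 ∈ N.V) ∧
  (∀ v, ¬ Relation.TransGen (fun u w => (u, w) ∈ N.A) v v) ∧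
  (∃! r, N.isRoot r) ∧
  (∀ v ∈ N.V, N.isRoot v ∨ N.isLeaf v ∨ N.isTreeNode v ∨ N.isRetic v)

/-- `(i,j)` is a cherry: `i ≠ j` are leaves with a common parent. -/
def isCherry (N : Net) (i j : ℕ) : Prop :=
  i ≠ j ∧ N.isLeaf i ∧ N.isLeaf j ∧ ∃ p, (p, i) ∈ N.A ∧ (p, j) ∈ N.A

/-- `(i,j)` is a reticulated cherry: the parent of `i` is a reticulation,
the parent of `j` is a tree node and a parent of the parent of `i`. -/
def isRetCherry (N : Net) (i j : ℕ) : Prop :=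
  i ≠ j ∧ N.isLeaf i ∧ N.isLeaf j ∧
    ∃ pi pj, (pi, i) ∈ N.A ∧ (pj, j) ∈ N.A ∧
      N.isRetic pi ∧ N.isTreeNode pj ∧ (pj, pi) ∈ N.A

/-- `(i,j)` is a reducible pair. -/
def Reducible (N : Net) (s : ℕ × ℕ) : Prop := N.isCherry s.1 s.2 ∨ N.isRetCherry s.1 s.2

end Net

/-- The reduction of a cherry `(i,j)`: delete leaf `i` and simplify the
(now elementary) common parent `p`, whose parent is `g`. -/
def CherryReduce (N : Net) (i j : ℕ) (N' : Net) : Prop :=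
  ∃ p g, (p, i) ∈ N.A ∧ (p, j) ∈ N.A ∧ (g, p) ∈ N.A ∧
    N'.V = (N.V.erase i).erase p ∧
    N'.A = (N.A \ {(p, i), (p, j), (g, p)}) ∪ {(g, j)}

/-- The reduction of a reticulated cherry `(i,j)`: delete the arc from the parent
`pj` of `j` to the parent `pi` of `i`, and simplify the two elementary nodes. -/
def RetCherryReduce (N : Net) (i j : ℕ) (N' : Net) : Prop :=
  ∃ pi pj q g, (pi, i) ∈ N.A ∧ (pj, j) ∈ N.A ∧ (pj, pi) ∈ N.A ∧
    (q, pi) ∈ N.A ∧ q ≠ pj ∧ (g, pj) ∈ N.A ∧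
    N'.V = (N.V.erase pi).erase pj ∧
    N'.A = (N.A \ {(pj, pi), (q, pi), (pi, i), (g, pj), (pj, j)}) ∪ {(q, i), (g, j)}

/-- `N'` is the reduction `N^{(i,j)}` of the reducible pair `s = (i,j)` in `N`. -/
def Reduces (N : Net) (s : ℕ × ℕ) (N' : Net) : Prop :=
  (N.isCherry s.1 s.2 ∧ CherryReduce N s.1 s.2 N') ∨
  (N.isRetCherry s.1 s.2 ∧ RetCherryReduce N s.1 s.2 N')

/-- `N'` is the result of reducing in `N` the pairs of the sequence `S`, from left to right. -/
inductive ReducesSeq : Net → List (ℕ × ℕ) → Net → Prop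
  | nil (N : Net) : ReducesSeq N [] N
  | cons {N M N' : Net} {s : ℕ × ℕ} {S : List (ℕ × ℕ)} :
      Reduces N s M → ReducesSeq M S N' → ReducesSeq N (s :: S) N'

/-- `N` is the trivial network `I l` (a root and the leaf `l`). -/
def isTrivial (N : Net) (l : ℕ) : Prop :=
  ∃ r, r ≠ l ∧ N.V = {r, l} ∧ N.A = {(r, l)}

/-- `S` is a complete reducible sequence for `N`. -/
def CompleteRS (N : Net) (S : List (ℕ × ℕ)) : Prop :=
  ∃ N' l, ReducesSeq N S N' ∧ isTrivial N' l

/-- `N` is an orchard network. -/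
def Net.isOrchard (N : Net) : Prop := N.isPhylo ∧ ∃ S, CompleteRS N S

/-- Isomorphism of networks: an arc-preserving and arc-reflecting bijection
of the nodes which is the identity on the leaves. -/
def NetIso (N N' : Net) : Prop :=
  ∃ φ : ℕ → ℕ, Set.BijOn φ ↑N.V ↑N'.V ∧
    (∀ u ∈ N.V, ∀ v ∈ N.V, ((u, v) ∈ N.A ↔ (φ u, φ v) ∈ N'.A)) ∧
    ∀ l ∈ N.leaves, φ l = l

/-- Augmentation of `(i,j)` when `i` is a new taxon: create a new leaf `i`,
subdivide the arc `(q,j)` into `j` with a new node `p`, and add the arc `(p,i)`. -/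
def CherryAug (N : Net) (i j : ℕ) (N' : Net) : Prop :=
  ∃ q p, (q, j) ∈ N.A ∧ i ∉ N.V ∧ p ∉ N.V ∧ p ≠ i ∧
    N'.V = insert i (insert p N.V) ∧
    N'.A = (N.A.erase (q, j)) ∪ {(q, p), (p, j), (p, i)}

/-- Augmentation of `(i,j)` when `i` is already a leaf: subdivide the arcs into
`i` and `j` with new nodes `pi`, `pj` and add the arc `(pj, pi)`. -/
def RetAug (N : Net) (i j : ℕ) (N' : Net) : Prop :=
  ∃ qi qj pi pj, (qi, i) ∈ N.A ∧ (qj, j) ∈ N.A ∧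
    pi ∉ N.V ∧ pj ∉ N.V ∧ pi ≠ pj ∧
    N'.V = insert pi (insert pj N.V) ∧
    N'.A = ((N.A.erase (qi, i)).erase (qj, j)) ∪
      {(qi, pi), (pi, i), (qj, pj), (pj, j), (pj, pi)}

/-- `N'` is the augmentation `^{(i,j)}N` of the pair `s = (i,j)` in `N`. -/
def Augments (N : Net) (s : ℕ × ℕ) (N' : Net) : Prop :=
  s.1 ≠ s.2 ∧ N.isLeaf s.2 ∧
    ((s.1 ∉ N.leaves ∧ CherryAug N s.1 s.2 N') ∨
     (s.1 ∈ N.leaves ∧ RetAug N s.1 s.2 N'))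

/-- The total order on pairs: `(i,j) ≤ (i',j')` iff `i < i'` or (`i = i'` and `j ≤ j'`). -/
def pairLE (p q : ℕ × ℕ) : Prop := p.1 < q.1 ∨ (p.1 = q.1 ∧ p.2 ≤ q.2)

/-- Strict version of `pairLE`. -/
def pairLT (p q : ℕ × ℕ) : Prop := p.1 < q.1 ∨ (p.1 = q.1 ∧ p.2 < q.2)

/-- Lexicographic order on sequences of pairs (of the same length). -/
def seqLE : List (ℕ × ℕ) → List (ℕ × ℕ) → Prop
  | [], [] => True
  | p :: S, q :: S' => pairLT p q ∨ (p = q ∧ seqLE S S')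
  | _, _ => False

/-- `s` is the minimum reducible pair of `N`. -/
def isMRP (N : Net) (s : ℕ × ℕ) : Prop :=
  N.Reducible s ∧ ∀ t, N.Reducible t → pairLE s t

/-- `S` is the minimum complete reducible sequence of `N`. -/
def isMCRS (N : Net) (S : List (ℕ × ℕ)) : Prop :=
  CompleteRS N S ∧ ∀ S', CompleteRS N S' → seqLE S S'

/-- `N` is (isomorphic to) the network `^S I` generated by applying the
augmentations of `S`, from right to left, to a trivial network. -/
inductive Generates : List (ℕ × ℕ) → Net → Prop
  | triv {N : Net} {l : ℕ} : isTrivial N l → Generates [] N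
  | cons {s : ℕ × ℕ} {S : List (ℕ × ℕ)} {N N' : Net} :
      Generates S N → Augments N s N' → Generates (s :: S) N'

/-- `S` is a minimum augmentation sequence: `S = MCRS(^S I)`. -/
def isMinAugSeq (S : List (ℕ × ℕ)) : Prop :=
  ∃ N, Generates S N ∧ isMCRS N S

/-- `N` is tree-child: every internal node has a child that is not a reticulation. -/
def Net.isTreeChild (N : Net) : Prop :=
  ∀ v ∈ N.V, ¬ N.isLeaf v → ∃ c, (v, c) ∈ N.A ∧ ¬ N.isRetic c

/-- The possible states of a taxon in a network. -/
inductive LState | sN | sP | sS | sT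
deriving DecidableEq

open Classical in
/-- The state `σ_N(i)` of a taxon `i`: `sN` if `i` is not a leaf of `N`; otherwise
`sP` if its parent is a reticulation; otherwise `sS` if its sibling is a
reticulation; otherwise `sT`. -/
noncomputable def state (N : Net) (i : ℕ) : LState :=
  if ¬ N.isLeaf i then .sN
  else if ∃ p, (p, i) ∈ N.A ∧ N.isRetic p then .sP
  else if ∃ p s, (p, i) ∈ N.A ∧ (p, s) ∈ N.A ∧ s ≠ i ∧ N.isRetic s then .sS
  else .sT
lemma state_eq_sN (M : Net) (v : ℕ) (h : ¬ M.isLeaf v) : state M v = LState.sN := by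
  unfold state; rw [if_pos h]

lemma state_eq_sP (M : Net) (v : ℕ) (h : M.isLeaf v)
    (hp : ∃ p, (p, v) ∈ M.A ∧ M.isRetic p) : state M v = LState.sP := by
  unfold state; rw [if_neg (not_not.2 h), if_pos hp]

lemma state_eq_sS (M : Net) (v : ℕ) (h : M.isLeaf v)
    (hnp : ¬ ∃ p, (p, v) ∈ M.A ∧ M.isRetic p)
    (hs : ∃ p s, (p, v) ∈ M.A ∧ (p, s) ∈ M.A ∧ s ≠ v ∧ M.isRetic s) :
    state M v = LState.sS := by
  unfold state; rw [if_neg (not_not.2 h), if_neg hnp, if_pos hs]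

lemma state_eq_sT (M : Net) (v : ℕ) (h : M.isLeaf v)
    (hnp : ¬ ∃ p, (p, v) ∈ M.A ∧ M.isRetic p)
    (hns : ¬ ∃ p s, (p, v) ∈ M.A ∧ (p, s) ∈ M.A ∧ s ≠ v ∧ M.isRetic s) :
    state M v = LState.sT := by
  unfold state; rw [if_neg (not_not.2 h), if_neg hnp, if_neg hns]

lemma state_congr (M M' : Net) (v : ℕ)
    (h1 : M.isLeaf v ↔ M'.isLeaf v)
    (h2 : (∃ p, (p, v) ∈ M.A ∧ M.isRetic p) ↔ (∃ p, (p, v) ∈ M'.A ∧ M'.isRetic p))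
    (h3 : (∃ p s, (p, v) ∈ M.A ∧ (p, s) ∈ M.A ∧ s ≠ v ∧ M.isRetic s) ↔
          (∃ p s, (p, v) ∈ M'.A ∧ (p, s) ∈ M'.A ∧ s ≠ v ∧ M'.isRetic s)) :
    state M v = state M' v := by
  by_cases hl : M.isLeaf v
  · by_cases hp : ∃ p, (p, v) ∈ M.A ∧ M.isRetic p
    · rw [state_eq_sP M v hl hp, state_eq_sP M' v (h1.1 hl) (h2.1 hp)]
    · by_cases hs : ∃ p s, (p, v) ∈ M.A ∧ (p, s) ∈ M.A ∧ s ≠ v ∧ M.isRetic s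
      · rw [state_eq_sS M v hl hp hs,
          state_eq_sS M' v (h1.1 hl) (fun hh => hp (h2.2 hh)) (h3.1 hs)]
      · rw [state_eq_sT M v hl hp hs,
          state_eq_sT M' v (h1.1 hl) (fun hh => hp (h2.2 hh)) (fun hh => hs (h3.2 hh))]
  · rw [state_eq_sN M v hl, state_eq_sN M' v (fun hh => hl (h1.2 hh))]
/-- State update when adding a reticulated cherry (`σ_N(i) = T`, `i ∈ X`): in
`N' = ^{(i,j)}N` we get `σ(i) = P`, `σ(j) = S`, and for `l ∉ {i,j}`,
`σ(l) = S` if `(i,l)` is a cherry of `N` and `σ(l)` is unchanged otherwise. -/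
theorem state_update_retAug (N N' : Net) (i j : ℕ)
    (h : N.isPhylo) (htc : N.isTreeChild) (hij : i ≠ j)
    (hj : N.isLeaf j) (hiX : N.isLeaf i)
    (hi : state N i = LState.sT) (haug : Augments N (i, j) N') :
    state N' i = LState.sP ∧ state N' j = LState.sS ∧
    ∀ l : ℕ, l ≠ i → l ≠ j →
      (N.isCherry i l → state N' l = LState.sS) ∧
      (¬ N.isCherry i l → state N' l = state N l) := by
  classical
  have hVA : ∀ a ∈ N.A, a.1 ∈ N.V ∧ a.2 ∈ N.V := h.1
  have hclass := h.2.2.2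
  obtain ⟨-, -, hor⟩ := haug
  have hileaves : i ∈ N.leaves := by
    simp only [Net.leaves, Finset.mem_filter]
    exact ⟨hiX.1, hiX.2.1, hiX.2.2⟩
  rcases hor with ⟨hni, -⟩ | ⟨-, hra⟩
  · exact absurd hileaves hni
  obtain ⟨qi, qj, pi, pj, hqiiA, hqjjA, hpiV, hpjV, hpipj, hV', hA'⟩ := hra
  -- membership characterization of the arcs of N'
  have hmem : ∀ a : ℕ × ℕ, a ∈ N'.A ↔
      (a ∈ N.A ∧ a ≠ (qi, i) ∧ a ≠ (qj, j)) ∨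
      a = (qi, pi) ∨ a = (pi, i) ∨ a = (qj, pj) ∨ a = (pj, j) ∨ a = (pj, pi) := by
    intro a
    simp only [hA', Finset.mem_union, Finset.mem_erase, Finset.mem_insert,
      Finset.mem_singleton]
    tauto
  -- basic facts
  have hiV : i ∈ N.V := hiX.1
  have hjV : j ∈ N.V := hj.1
  have hqiV : qi ∈ N.V := (hVA _ hqiiA).1
  have hqjV : qj ∈ N.V := (hVA _ hqjjA).1
  have hnoout : ∀ v, N.outdeg v = 0 → ∀ c, (v, c) ∉ N.A := by
    intro v hv c hc
    have h1 : (v, c) ∈ N.A.filter (fun a => a.1 = v) := Finset.mem_filter.2 ⟨hc, rfl⟩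
    have hv' : (N.A.filter (fun a => a.1 = v)).card = 0 := hv
    rw [Finset.card_eq_zero.mp hv'] at h1
    exact absurd h1 (Finset.notMem_empty _)
  have hiout : ∀ c, (i, c) ∉ N.A := hnoout i hiX.2.2
  have hjout : ∀ c, (j, c) ∉ N.A := hnoout j hj.2.2
  have hqi_ne_i : qi ≠ i := fun hh => hiout i (hh ▸ hqiiA)
  have hqi_ne_j : qi ≠ j := fun hh => hjout i (hh ▸ hqiiA)
  have hqj_ne_i : qj ≠ i := fun hh => hiout j (hh ▸ hqjjA)
  have hqj_ne_j : qj ≠ j := fun hh => hjout j (hh ▸ hqjjA)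
  have hpi_ne : ∀ v ∈ N.V, pi ≠ v := fun v hv hh => hpiV (hh ▸ hv)
  have hpj_ne : ∀ v ∈ N.V, pj ≠ v := fun v hv hh => hpjV (hh ▸ hv)
  have hupar : ∀ v, N.indeg v = 1 → ∀ p p', (p, v) ∈ N.A → (p', v) ∈ N.A → p = p' := by
    intro v hv p p' hp hp'
    have hv' : (N.A.filter (fun a => a.2 = v)).card ≤ 1 := le_of_eq hv
    have := Finset.card_le_one.mp hv' (p, v) (Finset.mem_filter.2 ⟨hp, rfl⟩)
      (p', v) (Finset.mem_filter.2 ⟨hp', rfl⟩)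
    exact congrArg Prod.fst this
  -- filter computations in N'
  have hfin_i : N'.A.filter (fun a => a.2 = i) = {(pi, i)} := by
    ext ⟨u, w⟩
    simp only [Finset.mem_filter, hmem, Finset.mem_singleton]
    constructor
    · rintro ⟨⟨ha, hne1, -⟩ | he | he | he | he | he, hw⟩
      · exact absurd (by rw [hupar i hiX.2.1 u qi (hw ▸ ha) hqiiA, hw]) hne1
      · exact absurd ((congrArg Prod.snd he).symm.trans hw) (hpi_ne i hiV)
      · exact he
      · exact absurd ((congrArg Prod.snd he).symm.trans hw) (hpj_ne i hiV)
      · exact absurd ((congrArg Prod.snd he).symm.trans hw) (Ne.symm hij)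
      · exact absurd ((congrArg Prod.snd he).symm.trans hw) (hpi_ne i hiV)
    · intro he
      exact ⟨Or.inr (Or.inr (Or.inl he)), congrArg Prod.snd he⟩
  have hfout_i : N'.A.filter (fun a => a.1 = i) = ∅ := by
    rw [Finset.eq_empty_iff_forall_notMem]
    rintro ⟨u, w⟩ hm
    rw [Finset.mem_filter] at hm
    obtain ⟨hc, hw⟩ := hm
    rcases (hmem _).1 hc with ⟨ha, -, -⟩ | he | he | he | he | he
    · exact hiout w (hw ▸ ha)
    · exact hqi_ne_i ((congrArg Prod.fst he).symm.trans hw)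
    · exact hpi_ne i hiV ((congrArg Prod.fst he).symm.trans hw)
    · exact hqj_ne_i ((congrArg Prod.fst he).symm.trans hw)
    · exact hpj_ne i hiV ((congrArg Prod.fst he).symm.trans hw)
    · exact hpj_ne i hiV ((congrArg Prod.fst he).symm.trans hw)
  have hfin_j : N'.A.filter (fun a => a.2 = j) = {(pj, j)} := by
    ext ⟨u, w⟩
    simp only [Finset.mem_filter, hmem, Finset.mem_singleton]
    constructor
    · rintro ⟨⟨ha, -, hne2⟩ | he | he | he | he | he, hw⟩
      · exact absurd (by rw [hupar j hj.2.1 u qj (hw ▸ ha) hqjjA, hw]) hne2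
      · exact absurd ((congrArg Prod.snd he).symm.trans hw) (hpi_ne j hjV)
      · exact absurd ((congrArg Prod.snd he).symm.trans hw) hij
      · exact absurd ((congrArg Prod.snd he).symm.trans hw) (hpj_ne j hjV)
      · exact he
      · exact absurd ((congrArg Prod.snd he).symm.trans hw) (hpi_ne j hjV)
    · intro he
      exact ⟨Or.inr (Or.inr (Or.inr (Or.inr (Or.inl he)))), congrArg Prod.snd he⟩
  have hfout_j : N'.A.filter (fun a => a.1 = j) = ∅ := by
    rw [Finset.eq_empty_iff_forall_notMem]
    rintro ⟨u, w⟩ hm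
    rw [Finset.mem_filter] at hm
    obtain ⟨hc, hw⟩ := hm
    rcases (hmem _).1 hc with ⟨ha, -, -⟩ | he | he | he | he | he
    · exact hjout w (hw ▸ ha)
    · exact hqi_ne_j ((congrArg Prod.fst he).symm.trans hw)
    · exact hpi_ne j hjV ((congrArg Prod.fst he).symm.trans hw)
    · exact hqj_ne_j ((congrArg Prod.fst he).symm.trans hw)
    · exact hpj_ne j hjV ((congrArg Prod.fst he).symm.trans hw)
    · exact hpj_ne j hjV ((congrArg Prod.fst he).symm.trans hw)
  have hfin_pi : N'.A.filter (fun a => a.2 = pi) = {(qi, pi), (pj, pi)} := by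
    ext ⟨u, w⟩
    simp only [Finset.mem_filter, hmem, Finset.mem_insert, Finset.mem_singleton]
    constructor
    · rintro ⟨⟨ha, -, -⟩ | he | he | he | he | he, hw⟩
      · exact absurd (hw ▸ (hVA _ ha).2) hpiV
      · exact Or.inl he
      · exact absurd ((congrArg Prod.snd he).symm.trans hw) (Ne.symm (hpi_ne i hiV))
      · exact absurd ((congrArg Prod.snd he).symm.trans hw) (Ne.symm hpipj)
      · exact absurd ((congrArg Prod.snd he).symm.trans hw) (Ne.symm (hpi_ne j hjV))
      · exact Or.inr he
    · rintro (he | he)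
      · exact ⟨Or.inr (Or.inl he), congrArg Prod.snd he⟩
      · exact ⟨Or.inr (Or.inr (Or.inr (Or.inr (Or.inr he)))), congrArg Prod.snd he⟩
  have hfout_pi : N'.A.filter (fun a => a.1 = pi) = {(pi, i)} := by
    ext ⟨u, w⟩
    simp only [Finset.mem_filter, hmem, Finset.mem_singleton]
    constructor
    · rintro ⟨⟨ha, -, -⟩ | he | he | he | he | he, hw⟩
      · exact absurd (hw ▸ (hVA _ ha).1) hpiV
      · exact absurd ((congrArg Prod.fst he).symm.trans hw) (Ne.symm (hpi_ne qi hqiV))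
      · exact he
      · exact absurd ((congrArg Prod.fst he).symm.trans hw) (Ne.symm (hpi_ne qj hqjV))
      · exact absurd ((congrArg Prod.fst he).symm.trans hw) (Ne.symm hpipj)
      · exact absurd ((congrArg Prod.fst he).symm.trans hw) (Ne.symm hpipj)
    · intro he
      exact ⟨Or.inr (Or.inr (Or.inl he)), congrArg Prod.fst he⟩
  have hfin_pj : N'.A.filter (fun a => a.2 = pj) = {(qj, pj)} := by
    ext ⟨u, w⟩
    simp only [Finset.mem_filter, hmem, Finset.mem_singleton]
    constructor
    · rintro ⟨⟨ha, -, -⟩ | he | he | he | he | he, hw⟩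
      · exact absurd (hw ▸ (hVA _ ha).2) hpjV
      · exact absurd ((congrArg Prod.snd he).symm.trans hw) hpipj
      · exact absurd ((congrArg Prod.snd he).symm.trans hw) (Ne.symm (hpj_ne i hiV))
      · exact he
      · exact absurd ((congrArg Prod.snd he).symm.trans hw) (Ne.symm (hpj_ne j hjV))
      · exact absurd ((congrArg Prod.snd he).symm.trans hw) hpipj
    · intro he
      exact ⟨Or.inr (Or.inr (Or.inr (Or.inl he))), congrArg Prod.snd he⟩
  -- general indegree preservation
  have hInd : ∀ v, v ≠ i → v ≠ j → v ≠ pi → v ≠ pj →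
      N'.A.filter (fun a => a.2 = v) = N.A.filter (fun a => a.2 = v) := by
    intro v h1 h2 h3 h4
    ext ⟨u, w⟩
    simp only [Finset.mem_filter, hmem]
    constructor
    · rintro ⟨⟨ha, -, -⟩ | he | he | he | he | he, hw⟩
      · exact ⟨ha, hw⟩
      · exact absurd ((congrArg Prod.snd he).symm.trans hw) (Ne.symm h3)
      · exact absurd ((congrArg Prod.snd he).symm.trans hw) (Ne.symm h1)
      · exact absurd ((congrArg Prod.snd he).symm.trans hw) (Ne.symm h4)
      · exact absurd ((congrArg Prod.snd he).symm.trans hw) (Ne.symm h2)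
      · exact absurd ((congrArg Prod.snd he).symm.trans hw) (Ne.symm h3)
    · rintro ⟨ha, hw⟩
      exact ⟨Or.inl ⟨ha, fun he => h1 (hw.symm.trans (congrArg Prod.snd he)),
        fun he => h2 (hw.symm.trans (congrArg Prod.snd he))⟩, hw⟩
  -- general outdegree preservation for old nodes
  have hOut : ∀ v ∈ N.V, N'.outdeg v = N.outdeg v := by
    intro v hv
    have himg : N'.A.filter (fun a => a.1 = v) =
        (N.A.filter (fun a => a.1 = v)).image
          (fun a => if a = (qi, i) then (qi, pi) else if a = (qj, j) then (qj, pj) else a) := by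
      ext b
      simp only [Finset.mem_filter, hmem, Finset.mem_image]
      constructor
      · rintro ⟨⟨ha, hne1, hne2⟩ | rfl | rfl | rfl | rfl | rfl, hw⟩
        · exact ⟨b, ⟨ha, hw⟩, by rw [if_neg hne1, if_neg hne2]⟩
        · exact ⟨(qi, i), ⟨hqiiA, hw⟩, by rw [if_pos rfl]⟩
        · exact absurd (show pi ∈ N.V from by rw [show pi = v from hw]; exact hv) hpiV
        · exact ⟨(qj, j), ⟨hqjjA, hw⟩, by
            rw [if_neg (fun he => hij (congrArg Prod.snd he).symm), if_pos rfl]⟩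
        · exact absurd (show pj ∈ N.V from by rw [show pj = v from hw]; exact hv) hpjV
        · exact absurd (show pj ∈ N.V from by rw [show pj = v from hw]; exact hv) hpjV
      · rintro ⟨a, ⟨ha, hw⟩, rfl⟩
        by_cases h1 : a = (qi, i)
        · subst h1
          rw [if_pos rfl]
          exact ⟨Or.inr (Or.inl rfl), hw⟩
        · by_cases h2 : a = (qj, j)
          · subst h2
            rw [if_neg h1, if_pos rfl]
            exact ⟨Or.inr (Or.inr (Or.inr (Or.inl rfl))), hw⟩
          · rw [if_neg h1, if_neg h2]
            exact ⟨Or.inl ⟨ha, h1, h2⟩, hw⟩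
    have hinj : Set.InjOn
        (fun a => if a = (qi, i) then (qi, pi) else if a = (qj, j) then (qj, pj) else a)
        ↑(N.A.filter (fun a => a.1 = v)) := by
      intro a hamem b hbmem hab
      have haA : a ∈ N.A := (Finset.mem_filter.1 hamem).1
      have hbA : b ∈ N.A := (Finset.mem_filter.1 hbmem).1
      have hqipiA : (qi, pi) ∉ N.A := fun hh => hpiV ((hVA _ hh).2)
      have hqjpjA : (qj, pj) ∉ N.A := fun hh => hpjV ((hVA _ hh).2)
      dsimp only at hab
      by_cases h1 : a = (qi, i) <;> by_cases h2 : b = (qi, i)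
      · rw [h1, h2]
      · exfalso
        rw [if_pos h1, if_neg h2] at hab
        by_cases h3 : b = (qj, j)
        · rw [if_pos h3] at hab
          exact hpipj (congrArg Prod.snd hab)
        · rw [if_neg h3] at hab
          rw [← hab] at hbA
          exact hqipiA hbA
      · exfalso
        rw [if_neg h1, if_pos h2] at hab
        by_cases h3 : a = (qj, j)
        · rw [if_pos h3] at hab
          exact hpipj (congrArg Prod.snd hab).symm
        · rw [if_neg h3] at hab
          rw [hab] at haA
          exact hqipiA haA
      · rw [if_neg h1, if_neg h2] at hab
        by_cases h3 : a = (qj, j) <;> by_cases h4 : b = (qj, j)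
        · rw [h3, h4]
        · exfalso
          rw [if_pos h3, if_neg h4] at hab
          rw [← hab] at hbA
          exact hqjpjA hbA
        · exfalso
          rw [if_neg h3, if_pos h4] at hab
          rw [hab] at haA
          exact hqjpjA haA
        · rwa [if_neg h3, if_neg h4] at hab
    rw [Net.outdeg, Net.outdeg, himg, Finset.card_image_of_injOn hinj]
  -- derived facts
  have hVsub : ∀ v ∈ N.V, v ∈ N'.V := by
    intro v hv; rw [hV']; exact Finset.mem_insert_of_mem (Finset.mem_insert_of_mem hv)
  have hindeq : ∀ v ∈ N.V, v ≠ i → v ≠ j → N'.indeg v = N.indeg v := by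
    intro v hv h1 h2
    show (N'.A.filter (fun a => a.2 = v)).card = (N.A.filter (fun a => a.2 = v)).card
    rw [hInd v h1 h2 (Ne.symm (hpi_ne v hv)) (Ne.symm (hpj_ne v hv))]
  have hretic_iff : ∀ v ∈ N.V, v ≠ i → v ≠ j → (N'.isRetic v ↔ N.isRetic v) := by
    intro v hv h1 h2
    unfold Net.isRetic
    rw [hindeq v hv h1 h2, hOut v hv]
    exact ⟨fun hh => ⟨hv, hh.2⟩, fun hh => ⟨hVsub v hv, hh.2⟩⟩
  have hleaf_iff : ∀ v ∈ N.V, v ≠ i → v ≠ j → (N'.isLeaf v ↔ N.isLeaf v) := by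
    intro v hv h1 h2
    unfold Net.isLeaf
    rw [hindeq v hv h1 h2, hOut v hv]
    exact ⟨fun hh => ⟨hv, hh.2⟩, fun hh => ⟨hVsub v hv, hh.2⟩⟩
  -- degrees of the special nodes in N'
  have hind_i' : N'.indeg i = 1 := by
    show (N'.A.filter (fun a => a.2 = i)).card = 1
    rw [hfin_i]; rfl
  have hout_i' : N'.outdeg i = 0 := by
    show (N'.A.filter (fun a => a.1 = i)).card = 0
    rw [hfout_i]; rfl
  have hind_j' : N'.indeg j = 1 := by
    show (N'.A.filter (fun a => a.2 = j)).card = 1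
    rw [hfin_j]; rfl
  have hout_j' : N'.outdeg j = 0 := by
    show (N'.A.filter (fun a => a.1 = j)).card = 0
    rw [hfout_j]; rfl
  have hind_pi' : N'.indeg pi = 2 := by
    show (N'.A.filter (fun a => a.2 = pi)).card = 2
    rw [hfin_pi]
    rw [Finset.card_insert_of_notMem (fun hh =>
      hpj_ne qi hqiV (congrArg Prod.fst (Finset.mem_singleton.1 hh)).symm)]
    rfl
  have hout_pi' : N'.outdeg pi = 1 := by
    show (N'.A.filter (fun a => a.1 = pi)).card = 1
    rw [hfout_pi]; rfl
  have hind_pj' : N'.indeg pj = 1 := by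
    show (N'.A.filter (fun a => a.2 = pj)).card = 1
    rw [hfin_pj]; rfl
  have hpi_retic' : N'.isRetic pi :=
    ⟨by rw [hV']; exact Finset.mem_insert_self _ _, hind_pi', hout_pi'⟩
  have hpj_nr' : ¬ N'.isRetic pj := fun hr => by
    have h1 := hr.2.1; rw [hind_pj'] at h1; omega
  have hj_nr' : ¬ N'.isRetic j := fun hr => by
    have h1 := hr.2.1; rw [hind_j'] at h1; omega
  have hi_nrN : ¬ N.isRetic i := fun hr => by
    have h1 := hr.2.2; have h2 := hiX.2.2; omega
  have hj_nrN : ¬ N.isRetic j := fun hr => by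
    have h1 := hr.2.2; have h2 := hj.2.2; omega
  -- qi is not a reticulation (in N nor N')
  have hiP : ¬ ∃ p, (p, i) ∈ N.A ∧ N.isRetic p := fun hp => by
    rw [state_eq_sP N i hiX hp] at hi; exact LState.noConfusion hi
  have hqi_nrN : ¬ N.isRetic qi := fun hr => hiP ⟨qi, hqiiA, hr⟩
  have hqi_ind : N.indeg qi ≤ 1 := by
    rcases hclass qi hqiV with hr | hl | ht | hre
    · rw [hr.2.1]; omega
    · exact absurd hqiiA (hnoout qi hl.2.2 i)
    · rw [ht.2.1]
    · exact absurd hre hqi_nrN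
  have hqi_nr' : ¬ N'.isRetic qi := fun hr => by
    have h1 := hr.2.1
    rw [hindeq qi hqiV hqi_ne_i hqi_ne_j] at h1
    omega
  -- leaves of N'
  have hileaf' : N'.isLeaf i := ⟨hVsub i hiV, hind_i', hout_i'⟩
  have hjleaf' : N'.isLeaf j := ⟨hVsub j hjV, hind_j', hout_j'⟩
  have hparent'_j : ∀ p, (p, j) ∈ N'.A → p = pj := by
    intro p hp
    have hm : (p, j) ∈ N'.A.filter (fun a => a.2 = j) := Finset.mem_filter.2 ⟨hp, rfl⟩
    rw [hfin_j] at hm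
    exact congrArg Prod.fst (Finset.mem_singleton.1 hm)
  have hpiiA' : (pi, i) ∈ N'.A := (hmem _).2 (Or.inr (Or.inr (Or.inl rfl)))
  have hpjjA' : (pj, j) ∈ N'.A := (hmem _).2 (Or.inr (Or.inr (Or.inr (Or.inr (Or.inl rfl)))))
  have hpjpiA' : (pj, pi) ∈ N'.A := (hmem _).2 (Or.inr (Or.inr (Or.inr (Or.inr (Or.inr rfl)))))
  have hqipiA' : (qi, pi) ∈ N'.A := (hmem _).2 (Or.inr (Or.inl rfl))
  -- arcs into old vertices other than i, j are preserved
  have harc : ∀ p l', l' ≠ i → l' ≠ j → l' ∈ N.V → ((p, l') ∈ N'.A ↔ (p, l') ∈ N.A) := by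
    intro p l' h1 h2 h3
    constructor
    · intro hp
      have hm : (p, l') ∈ N'.A.filter (fun a => a.2 = l') := Finset.mem_filter.2 ⟨hp, rfl⟩
      rw [hInd l' h1 h2 (Ne.symm (hpi_ne l' h3)) (Ne.symm (hpj_ne l' h3))] at hm
      exact (Finset.mem_filter.1 hm).1
    · intro hp
      exact (hmem _).2 (Or.inl ⟨hp, fun he => h1 (congrArg Prod.snd he),
        fun he => h2 (congrArg Prod.snd he)⟩)
  refine ⟨?_, ?_, ?_⟩
  · exact state_eq_sP N' i hileaf' ⟨pi, hpiiA', hpi_retic'⟩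
  · refine state_eq_sS N' j hjleaf' ?_ ⟨pj, pi, hpjjA', hpjpiA', hpi_ne j hjV, hpi_retic'⟩
    rintro ⟨p, hp, hpr⟩
    rw [hparent'_j p hp] at hpr
    exact hpj_nr' hpr
  · intro l hli hlj
    constructor
    · -- (i, l) is a cherry of N
      rintro ⟨hil, -, hlleaf, p, hpiA, hplA⟩
      have hlV : l ∈ N.V := hlleaf.1
      have hpqi : p = qi := hupar i hiX.2.1 p qi hpiA hqiiA
      have hqilA : (qi, l) ∈ N.A := hpqi ▸ hplA
      have hlleaf' : N'.isLeaf l := (hleaf_iff l hlV hli hlj).2 hlleaf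
      refine state_eq_sS N' l hlleaf' ?_
        ⟨qi, pi, (harc qi l hli hlj hlV).2 hqilA, hqipiA', hpi_ne l hlV, hpi_retic'⟩
      rintro ⟨p', hp', hpr'⟩
      have hp'A : (p', l) ∈ N.A := (harc p' l hli hlj hlV).1 hp'
      have hp'qi : p' = qi := hupar l hlleaf.2.1 p' qi hp'A hqilA
      rw [hp'qi] at hpr'
      exact hqi_nr' hpr'
    · -- (i, l) is not a cherry of N
      intro hnc
      by_cases hlleaf : N.isLeaf l
      · -- l is a leaf of N
        have hlV : l ∈ N.V := hlleaf.1
        have hex : ∃ q, (q, l) ∈ N.A := by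
          have hpos : 0 < (N.A.filter (fun a => a.2 = l)).card := by
            have h1 : (N.A.filter (fun a => a.2 = l)).card = 1 := hlleaf.2.1
            omega
          obtain ⟨a, ha⟩ := Finset.card_pos.mp hpos
          have hm := Finset.mem_filter.1 ha
          refine ⟨a.1, ?_⟩
          have h2 : (a.1, a.2) ∈ N.A := hm.1
          rwa [hm.2] at h2
        obtain ⟨q, hqlA⟩ := hex
        have hq_ne_qi : q ≠ qi := by
          rintro rfl
          exact hnc ⟨Ne.symm hli, hiX, hlleaf, q, hqiiA, hqlA⟩
        have hqV : q ∈ N.V := (hVA _ hqlA).1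
        have hq_ne_i : q ≠ i := fun hh => hiout l (hh ▸ hqlA)
        have hq_ne_j : q ≠ j := fun hh => hjout l (hh ▸ hqlA)
        have huparl := hupar l hlleaf.2.1
        refine (state_congr N N' l (hleaf_iff l hlV hli hlj).symm ⟨?_, ?_⟩ ⟨?_, ?_⟩).symm
        · rintro ⟨p, hp, hpr⟩
          have hpq : p = q := huparl p q hp hqlA
          exact ⟨q, (harc q l hli hlj hlV).2 hqlA,
            (hretic_iff q hqV hq_ne_i hq_ne_j).2 (hpq ▸ hpr)⟩
        · rintro ⟨p, hp', hpr'⟩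
          have hpA : (p, l) ∈ N.A := (harc p l hli hlj hlV).1 hp'
          have hpq : p = q := huparl p q hpA hqlA
          exact ⟨q, hqlA, (hretic_iff q hqV hq_ne_i hq_ne_j).1 (hpq ▸ hpr')⟩
        · rintro ⟨p, s, hpl, hps, hsl, hsr⟩
          have hsV : s ∈ N.V := (hVA _ hps).2
          have hs_ne_i : s ≠ i := fun hh => hi_nrN (hh ▸ hsr)
          have hs_ne_j : s ≠ j := fun hh => hj_nrN (hh ▸ hsr)
          refine ⟨p, s, (harc p l hli hlj hlV).2 hpl, ?_, hsl,
            (hretic_iff s hsV hs_ne_i hs_ne_j).2 hsr⟩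
          exact (hmem _).2 (Or.inl ⟨hps, fun he => hs_ne_i (congrArg Prod.snd he),
            fun he => hs_ne_j (congrArg Prod.snd he)⟩)
        · rintro ⟨p, s, hpl', hps', hsl, hsr'⟩
          have hplA : (p, l) ∈ N.A := (harc p l hli hlj hlV).1 hpl'
          have hpq : p = q := huparl p q hplA hqlA
          have hpV : p ∈ N.V := by rw [hpq]; exact hqV
          rcases (hmem _).1 hps' with ⟨ha, -, -⟩ | he | he | he | he | he
          · have hsV : s ∈ N.V := (hVA _ ha).2
            by_cases hsi : s = i
            · exfalso
              have hpqi : p = qi := hupar i hiX.2.1 p qi (hsi ▸ ha) hqiiA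
              exact hq_ne_qi (hpq.symm.trans hpqi)
            · by_cases hsj : s = j
              · exact absurd (hsj ▸ hsr') hj_nr'
              · exact ⟨p, s, hplA, ha, hsl, (hretic_iff s hsV hsi hsj).1 hsr'⟩
          · exact absurd (hpq.symm.trans (congrArg Prod.fst he)) hq_ne_qi
          · exact absurd (congrArg Prod.fst he).symm (hpi_ne p hpV)
          · have hspj : s = pj := congrArg Prod.snd he
            exact absurd (hspj ▸ hsr') hpj_nr'
          · exact absurd (congrArg Prod.fst he).symm (hpj_ne p hpV)
          · exact absurd (congrArg Prod.fst he).symm (hpj_ne p hpV)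
      · -- l is not a leaf of N
        have hnl' : ¬ N'.isLeaf l := by
          by_cases hlV : l ∈ N.V
          · exact fun hl' => hlleaf ((hleaf_iff l hlV hli hlj).1 hl')
          · by_cases hlpi : l = pi
            · intro hl'
              have h1 := hl'.2.1
              rw [hlpi, hind_pi'] at h1
              omega
            · by_cases hlpj : l = pj
              · intro hl'
                have h1 : (pj, j) ∈ N'.A.filter (fun a => a.1 = pj) :=
                  Finset.mem_filter.2 ⟨hpjjA', rfl⟩
                have h2 : (N'.A.filter (fun a => a.1 = l)).card = 0 := hl'.2.2
                rw [hlpj] at h2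
                rw [Finset.card_eq_zero.mp h2] at h1
                exact absurd h1 (Finset.notMem_empty _)
              · intro hl'
                have h1 := hl'.1
                rw [hV'] at h1
                rcases Finset.mem_insert.1 h1 with hh | h1
                · exact hlpi hh
                rcases Finset.mem_insert.1 h1 with hh | h1
                · exact hlpj hh
                · exact hlV h1
        rw [state_eq_sN N' l hnl', state_eq_sN N l hlleaf]
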